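/- arXiv:1805.09388 — 4 statements merged into one kernel-verified Lean document; each statement's English description precedes it below -/
import Mathlib

section
/- Let Σ be an n×n positive definite real matrix, K a real p×n matrix, and σ_u ∈ ℝ. Then the minimum eigenvalue of the block matrix [[Σ, Σ Kᵀ], [K Σ, K Σ Kᵀ + σ_u² I_p]] is at least σ_u² · min{ 1/2, λ_min(Σ) / (2‖K Σ Kᵀ‖ + σ_u²) }. -/
/-!
Let `λ = λ_min(Σ)`, `N = ‖K Σ Kᵀ‖` and let `c` be the claimed bound. Writing `x = (u, v)` and
`t = Kᵀv`, `w = u + t`, the quadratic form of the block matrix is `wᵀ Σ w + σ_u² |v|²`, which is at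
least `λ |w|² + σ_u² |v|²`, while `λ |t|² ≤ tᵀ Σ t = vᵀ K Σ Kᵀ v ≤ N |v|²`. Since `u = w - t`, it
remains to combine the weighted parallelogram inequality
`(λ - c) c |w - t|² ≤ λ ((λ - c) |w|² + c |t|²)` with `c N ≤ (λ - c)(σ_u² - c)`; the two terms of
the minimum defining `c` are exactly what makes the latter hold.
-/

open Matrix
open scoped Matrix.Norms.L2Operator MatrixOrder RealInnerProductSpace

variable {n : Type*} [Fintype n]

namespace Matrix

theorem IsHermitian.posSemidef_sub_smul_one [DecidableEq n] {A : Matrix n n ℝ}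
    (hA : A.IsHermitian) {l : ℝ} (hl : ∀ i, l ≤ hA.eigenvalues i) : (A - l • 1).PosSemidef := by
  have : algebraMap ℝ (Matrix n n ℝ) l ≤ A := by
    rw [algebraMap_le_iff_le_spectrum (ha := hA.isSelfAdjoint),
      hA.spectrum_real_eq_range_eigenvalues]
    rintro _ ⟨i, rfl⟩
    exact hl i
  rwa [le_iff, Algebra.algebraMap_eq_smul_one] at this

theorem IsHermitian.iInf_eigenvalues_mul_dotProduct_self_le [DecidableEq n] {A : Matrix n n ℝ}
    (hA : A.IsHermitian) (x : n → ℝ) : (⨅ i, hA.eigenvalues i) * (x ⬝ᵥ x) ≤ x ⬝ᵥ (A *ᵥ x) := by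
  have h := (hA.posSemidef_sub_smul_one fun i ↦ ciInf_le (Finite.bddBelow_range _) i)
    |>.dotProduct_mulVec_nonneg x
  rw [star_trivial, sub_mulVec, smul_mulVec, one_mulVec, dotProduct_sub, dotProduct_smul,
    smul_eq_mul] at h
  linarith

theorem dotProduct_mulVec_le_l2_opNorm_mul [DecidableEq n] (A : Matrix n n ℝ) (x : n → ℝ) :
    x ⬝ᵥ (A *ᵥ x) ≤ ‖A‖ * (x ⬝ᵥ x) := by
  set y : EuclideanSpace ℝ n := WithLp.toLp 2 x
  have hy : ‖y‖ ^ 2 = x ⬝ᵥ x := by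
    rw [← real_inner_self_eq_norm_sq, EuclideanSpace.inner_eq_star_dotProduct]
    simp [y]
  calc x ⬝ᵥ (A *ᵥ x) = ⟪y, toEuclideanCLM (𝕜 := ℝ) A y⟫ := (inner_toEuclideanCLM A y y).symm
    _ ≤ ‖y‖ * ‖toEuclideanCLM (𝕜 := ℝ) A y‖ := real_inner_le_norm _ _
    _ ≤ ‖y‖ * (‖A‖ * ‖y‖) := by gcongr; exact (toEuclideanCLM (𝕜 := ℝ) A).le_opNorm y
    _ = ‖A‖ * (x ⬝ᵥ x) := by rw [← hy]; ring

theorem dotProduct_self_nonneg {R : Type*} [Ring R] [LinearOrder R] [IsStrictOrderedRing R]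
    (x : n → R) : 0 ≤ x ⬝ᵥ x :=
  Finset.sum_nonneg fun i _ ↦ mul_self_nonneg (x i)

theorem mul_mul_dotProduct_sub_self_le (a b : ℝ) (w t : n → ℝ) :
    a * b * ((w - t) ⬝ᵥ (w - t)) ≤ (a + b) * (a * (w ⬝ᵥ w) + b * (t ⬝ᵥ t)) := by
  have h := dotProduct_self_nonneg (a • w + b • t)
  simp only [add_dotProduct, dotProduct_add, sub_dotProduct, dotProduct_sub, smul_dotProduct,
    dotProduct_smul, smul_eq_mul, dotProduct_comm t w] at h ⊢
  nlinarith

theorem isHermitian_fromBlocks_mul_transpose {m : Type*} [DecidableEq m] {S : Matrix n n ℝ}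
    (hS : S.IsHermitian) (K : Matrix m n ℝ) (s : ℝ) :
    (fromBlocks S (S * Kᵀ) (K * S) (K * S * Kᵀ + s • 1)).IsHermitian := by
  have hSt : Sᵀ = S := hS
  refine hS.fromBlocks ?_ (.add ?_ ?_) <;>
    simp [IsHermitian, conjTranspose_eq_transpose_of_trivial, transpose_mul, hSt, Matrix.mul_assoc]

theorem dotProduct_mul_mul_transpose_mulVec {m : Type*} [Fintype m] (S : Matrix n n ℝ)
    (K : Matrix m n ℝ) (v : m → ℝ) :
    v ⬝ᵥ ((K * S * Kᵀ) *ᵥ v) = (Kᵀ *ᵥ v) ⬝ᵥ (S *ᵥ (Kᵀ *ᵥ v)) := by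
  rw [← mulVec_mulVec, ← mulVec_mulVec, dotProduct_mulVec v, mulVec_transpose]

theorem sumElim_dotProduct_fromBlocks_mulVec {m : Type*} [Fintype m] [DecidableEq m]
    (S : Matrix n n ℝ) (K : Matrix m n ℝ) (s : ℝ) (u : n → ℝ) (v : m → ℝ) :
    Sum.elim u v ⬝ᵥ (fromBlocks S (S * Kᵀ) (K * S) (K * S * Kᵀ + s • 1) *ᵥ Sum.elim u v) =
      (u + Kᵀ *ᵥ v) ⬝ᵥ (S *ᵥ (u + Kᵀ *ᵥ v)) + s * (v ⬝ᵥ v) := by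
  have hK : ∀ y, v ⬝ᵥ (K *ᵥ y) = (Kᵀ *ᵥ v) ⬝ᵥ y := fun y ↦ by
    rw [dotProduct_mulVec, mulVec_transpose]
  rw [fromBlocks_mulVec, sumElim_dotProduct_sumElim]
  simp only [Sum.elim_comp_inl, Sum.elim_comp_inr, add_mulVec, smul_mulVec, one_mulVec,
    ← mulVec_mulVec, dotProduct_add, dotProduct_smul, smul_eq_mul, hK, mulVec_add, add_dotProduct]
  ring

end Matrix

theorem mul_min_half_div_bounds {lam N s : ℝ} (hlam : 0 ≤ lam) (hN : 0 ≤ N) (hs : 0 ≤ s) :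
    0 ≤ s * min (1 / 2) (lam / (2 * N + s)) ∧ 2 * (s * min (1 / 2) (lam / (2 * N + s))) ≤ s ∧
      s * min (1 / 2) (lam / (2 * N + s)) * (2 * N + s) ≤ s * lam := by
  refine ⟨by positivity, by nlinarith [min_le_left (1 / 2 : ℝ) (lam / (2 * N + s))], ?_⟩
  calc s * min (1 / 2) (lam / (2 * N + s)) * (2 * N + s)
      ≤ s * (lam / (2 * N + s) * (2 * N + s)) := by
        rw [mul_assoc]; gcongr; exact min_le_right _ _
    _ ≤ s * lam := by
        gcongr
        rcases eq_or_ne (2 * N + s) 0 with h0 | h0 <;> simp [h0, hlam]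

theorem mul_dotProduct_sub_add_le {lam N s c b : ℝ} (hc : 0 ≤ c) (h2c : 2 * c ≤ s)
    (hcN : c * (2 * N + s) ≤ s * lam) (hN : 0 ≤ N) (hlam : 0 ≤ lam) (hb : 0 ≤ b)
    {w t : n → ℝ} (ht : lam * (t ⬝ᵥ t) ≤ N * b) :
    c * ((w - t) ⬝ᵥ (w - t) + b) ≤ lam * (w ⬝ᵥ w) + s * b := by
  have hcl : c ≤ lam := by nlinarith
  rcases hcl.lt_or_eq with hlt | rfl
  · -- `c N ≤ (λ - c) s / 2 ≤ (λ - c) (s - c)`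
    have hslack : c * N ≤ (lam - c) * (s - c) := by nlinarith
    have hweighted := mul_mul_dotProduct_sub_self_le (lam - c) c w t
    rw [sub_add_cancel] at hweighted
    have key : (lam - c) * (c * ((w - t) ⬝ᵥ (w - t))) ≤
        (lam - c) * (lam * (w ⬝ᵥ w) + (s - c) * b) := calc
      _ ≤ (lam - c) * (lam * (w ⬝ᵥ w)) + c * (lam * (t ⬝ᵥ t)) := by linarith
      _ ≤ (lam - c) * (lam * (w ⬝ᵥ w)) + c * N * b := by rw [mul_assoc c]; gcongr
      _ ≤ (lam - c) * (lam * (w ⬝ᵥ w)) + (lam - c) * (s - c) * b := by gcongr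
      _ = (lam - c) * (lam * (w ⬝ᵥ w) + (s - c) * b) := by ring
    linarith [le_of_mul_le_mul_left key (sub_pos.2 hlt)]
  · rcases hc.lt_or_eq with hc0 | rfl
    · -- now `c = λ > 0`, which forces `N = 0` and hence `t = 0`
      have hN0 : N = 0 := by nlinarith
      subst hN0
      have ht0 : t = 0 := by
        rw [← dotProduct_self_eq_zero]
        nlinarith [dotProduct_self_nonneg t]
      subst ht0
      rw [sub_zero]
      nlinarith
    · nlinarith

/-- The minimum eigenvalue of the block matrix `[[Σ, ΣKᵀ], [KΣ, KΣKᵀ + σ_u² I]]`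
is at least `σ_u² · min{1/2, λ_min(Σ)/(2‖KΣKᵀ‖ + σ_u²)}`.  The statement
`λ_min(D) ≥ c` for the symmetric matrix `D` is expressed equivalently as
`D - c • I` being positive semidefinite; `λ_min(Σ)` is the infimum of the
eigenvalues of the Hermitian matrix `Σ`, and `‖·‖` is the `ℓ²` operator norm. -/
theorem stmt_5 {n p : ℕ} (S : Matrix (Fin n) (Fin n) ℝ)
    (K : Matrix (Fin p) (Fin n) ℝ) (σu : ℝ) (hS : S.PosDef) :
    (Matrix.fromBlocks S (S * Kᵀ) (K * S)
        (K * S * Kᵀ + σu ^ 2 • (1 : Matrix (Fin p) (Fin p) ℝ)) -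
      (σu ^ 2 * min (1 / 2)
          ((⨅ i, hS.1.eigenvalues i) / (2 * ‖K * S * Kᵀ‖ + σu ^ 2))) •
        (1 : Matrix (Fin n ⊕ Fin p) (Fin n ⊕ Fin p) ℝ)).PosSemidef := by
  set lam := ⨅ i, hS.1.eigenvalues i
  have hlam : 0 ≤ lam := Real.iInf_nonneg fun i ↦ (hS.eigenvalues_pos i).le
  obtain ⟨hc, h2c, hcN⟩ := mul_min_half_div_bounds hlam (norm_nonneg (K * S * Kᵀ)) (sq_nonneg σu)
  refine .of_dotProduct_mulVec_nonneg
    ((isHermitian_fromBlocks_mul_transpose hS.1 K _).sub (isHermitian_one.smul (.all _))) fun x ↦ ?_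
  rw [← Sum.elim_comp_inl_inr x, star_trivial, sub_mulVec, smul_mulVec, one_mulVec,
    dotProduct_sub, dotProduct_smul, smul_eq_mul, sumElim_dotProduct_fromBlocks_mulVec,
    sumElim_dotProduct_sumElim, sub_nonneg]
  set u := x ∘ Sum.inl
  set v := x ∘ Sum.inr
  set t := Kᵀ *ᵥ v
  have ht : lam * (t ⬝ᵥ t) ≤ ‖K * S * Kᵀ‖ * (v ⬝ᵥ v) := calc
    lam * (t ⬝ᵥ t) ≤ t ⬝ᵥ (S *ᵥ t) := hS.1.iInf_eigenvalues_mul_dotProduct_self_le t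
    _ = v ⬝ᵥ ((K * S * Kᵀ) *ᵥ v) := (dotProduct_mul_mul_transpose_mulVec S K v).symm
    _ ≤ _ := dotProduct_mulVec_le_l2_opNorm_mul _ v
  have hw := hS.1.iInf_eigenvalues_mul_dotProduct_self_le (u + t)
  have key := mul_dotProduct_sub_add_le hc h2c hcN (norm_nonneg _) hlam
    (dotProduct_self_nonneg v) (w := u + t) ht
  rw [add_sub_cancel_right] at key
  linarith
end

section
/- Let M be an n×n real matrix and N an n×n positive definite matrix, and let T be a positive integer. Define the nT×nT block matrix D(T) with blocks D(T)_{ij} (1 ≤ i,j ≤ T) given by: D_{ij} = (Mᵀ)^{j−i} S_{T−j} if i < j, D_{jj} = S_{T−j}, and D_{ij} = S_{T−i} M^{i−j} if i > j, where S_m = Σ_{k=0}^{m} (Mᵀ)^k N M^k. Then D(T) is positive definite. -/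
open Matrix
open scoped Kronecker

/-- `lyapPartialSum M N m = Σ_{k=0}^{m} (Mᵀ)^k N M^k`. -/
noncomputable def lyapPartialSum {n : ℕ} (M N : Matrix (Fin n) (Fin n) ℝ)
    (m : ℕ) : Matrix (Fin n) (Fin n) ℝ :=
  ∑ k ∈ Finset.range (m + 1), (Mᵀ) ^ k * N * M ^ k

/-!
Let `A` be the `T × T` block matrix with blocks `A k j = M ^ (k - j)` for `j ≤ k` and `0` above the
diagonal (the map from inputs `u` to states `x k = ∑_{j ≤ k} M ^ (k - j) u j`). Then
`D(T) = Aᵀ (I_T ⊗ N) A`: block `(i, j)` of the right side is `∑_{k ≥ max i j} (Mᵀ)^(k-i) N M^(k-j)`,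
which is `D_{ij}` after pulling out the common power of `Mᵀ` or `M`. Since `A` is block unitriangular,
`det A = 1`, so `A` is injective and `D(T)` inherits positive definiteness from `I_T ⊗ N`.
-/

namespace Matrix

theorem det_comp_of_blockTriangular_toDual {ι m R : Type*} [Fintype ι] [DecidableEq ι]
    [LinearOrder ι] [Fintype m] [DecidableEq m] [CommRing R] {X : Matrix ι ι (Matrix m m R)}
    (hX : X.BlockTriangular OrderDual.toDual) :
    (comp ι ι m m R X).det = ∏ k, (X k k).det := by
  rw [hX.comp.det_fintype]
  refine Fintype.prod_equiv OrderDual.ofDual _ _ fun k => ?_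
  let _ : Unique {i : ι // OrderDual.toDual i = k} := ⟨⟨⟨_, rfl⟩⟩, fun i => Subtype.ext i.2⟩
  rw [comp_toSquareBlock, det_reindex_self, ← det_reindex_self (Equiv.uniqueProd m _)]
  -- the square block of `comp X` at `k` is `X k k`, reindexed along `{k} × m ≃ m`
  rfl

theorem comp_diagonal_const {ι m R : Type*} [DecidableEq ι] [MulZeroOneClass R]
    (A : Matrix m m R) :
    comp ι ι m m R (diagonal fun _ => A) = (1 : Matrix ι ι R) ⊗ₖ A := by
  ext ⟨i, p⟩ ⟨j, q⟩
  by_cases h : i = j <;> simp [h]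

end Matrix

theorem Fin.sum_ite_le_eq_sum_range {α : Type*} [AddCommMonoid α] (T c : ℕ) (f : ℕ → α) :
    ∑ k : Fin T, (if c ≤ (k : ℕ) then f k else 0) = ∑ l ∈ Finset.range (T - c), f (c + l) := by
  rw [Fin.sum_univ_eq_sum_range (fun k => if c ≤ k then f k else 0), ← Finset.sum_filter,
    ← Finset.sum_Ico_eq_sum_range]
  congr 1
  ext k
  simp only [Finset.mem_filter, Finset.mem_range, Finset.mem_Ico]
  omega

def powerToeplitz {m R : Type*} [Semiring R] [DecidableEq m] [Fintype m] (M : Matrix m m R)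
    (T : ℕ) : Matrix (Fin T) (Fin T) (Matrix m m R) :=
  of fun k j => if j ≤ k then M ^ ((k : ℕ) - j) else 0

section powerToeplitz

variable {m R : Type*} [DecidableEq m] [Fintype m]

theorem powerToeplitz_blockTriangular [Semiring R] (M : Matrix m m R) (T : ℕ) :
    (powerToeplitz M T).BlockTriangular OrderDual.toDual :=
  fun _ _ h => if_neg (not_le.2 h)

theorem det_comp_powerToeplitz [CommRing R] (M : Matrix m m R) (T : ℕ) :
    (comp _ _ _ _ R (powerToeplitz M T)).det = 1 := by
  rw [det_comp_of_blockTriangular_toDual (powerToeplitz_blockTriangular M T)]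
  simp [powerToeplitz]

end powerToeplitz

section lyapBlock

variable {n : ℕ} (M N : Matrix (Fin n) (Fin n) ℝ)

/-- `D(T)` as a `T × T` matrix of `n × n` blocks; `comp` flattens it to the matrix of `stmt_11`. -/
noncomputable def lyapBlock (T : ℕ) : Matrix (Fin T) (Fin T) (Matrix (Fin n) (Fin n) ℝ) :=
  of fun i j =>
    if (i : ℕ) < (j : ℕ) then (Mᵀ) ^ ((j : ℕ) - (i : ℕ)) * lyapPartialSum M N (T - 1 - (j : ℕ))
    else if (i : ℕ) = (j : ℕ) then lyapPartialSum M N (T - 1 - (j : ℕ))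
    else lyapPartialSum M N (T - 1 - (i : ℕ)) * M ^ ((i : ℕ) - (j : ℕ))

theorem pow_transpose_mul_lyapPartialSum (a m : ℕ) :
    (Mᵀ) ^ a * lyapPartialSum M N m = ∑ l ∈ Finset.range (m + 1), (Mᵀ) ^ (a + l) * N * M ^ l := by
  simp only [lyapPartialSum, Finset.mul_sum, pow_add, mul_assoc]

theorem lyapPartialSum_mul_pow (a m : ℕ) :
    lyapPartialSum M N m * M ^ a = ∑ l ∈ Finset.range (m + 1), (Mᵀ) ^ l * N * M ^ (l + a) := by
  simp only [lyapPartialSum, Finset.sum_mul, pow_add, mul_assoc]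

theorem lyapBlock_apply (T : ℕ) (i j : Fin T) :
    lyapBlock M N T i j = ∑ k, (powerToeplitz M T k i)ᵀ * N * powerToeplitz M T k j := by
  have hterm : ∀ k : Fin T, (powerToeplitz M T k i)ᵀ * N * powerToeplitz M T k j =
      if max (i : ℕ) j ≤ k then (Mᵀ) ^ ((k : ℕ) - i) * N * M ^ ((k : ℕ) - j) else 0 := by
    intro k
    have hmax : max (i : ℕ) j ≤ k ↔ i ≤ k ∧ j ≤ k := max_le_iff
    by_cases hi : i ≤ k <;> by_cases hj : j ≤ k <;>
      simp [powerToeplitz, hmax, hi, hj, transpose_pow]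
  rw [Finset.sum_congr rfl fun k _ => hterm k,
    Fin.sum_ite_le_eq_sum_range T _ fun k => (Mᵀ) ^ (k - (i : ℕ)) * N * M ^ (k - (j : ℕ))]
  have hT : T - max (i : ℕ) j = T - 1 - max (i : ℕ) j + 1 := by omega
  rcases lt_trichotomy (i : ℕ) j with hij | hij | hij
  · rw [max_eq_right hij.le] at hT ⊢
    rw [hT, lyapBlock, of_apply, if_pos hij, pow_transpose_mul_lyapPartialSum]
    refine Finset.sum_congr rfl fun l _ => ?_
    rw [Nat.add_sub_cancel_left, Nat.sub_add_comm hij.le]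
  · rw [hij, max_self] at hT ⊢
    rw [hT, lyapBlock, of_apply, if_neg hij.not_lt, if_pos hij, lyapPartialSum]
    simp only [Nat.add_sub_cancel_left]
  · rw [max_eq_left hij.le] at hT ⊢
    rw [hT, lyapBlock, of_apply, if_neg (lt_asymm hij), if_neg hij.ne', lyapPartialSum_mul_pow]
    refine Finset.sum_congr rfl fun l _ => ?_
    rw [Nat.add_sub_cancel_left, Nat.sub_add_comm hij.le, add_comm]

theorem lyapBlock_eq (T : ℕ) : lyapBlock M N T =
    (powerToeplitz M T)ᵀ.map transpose * diagonal (fun _ => N) * powerToeplitz M T := by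
  ext i j : 2
  rw [lyapBlock_apply, mul_apply]
  simp only [mul_diagonal, map_apply, transpose_apply]

theorem comp_lyapBlock (T : ℕ) :
    comp _ _ _ _ ℝ (lyapBlock M N T) = (comp _ _ _ _ ℝ (powerToeplitz M T))ᴴ *
      ((1 : Matrix (Fin T) (Fin T) ℝ) ⊗ₖ N) * comp _ _ _ _ ℝ (powerToeplitz M T) := by
  rw [lyapBlock_eq, conjTranspose_eq_transpose_of_trivial, transpose_comp, ← comp_diagonal_const]
  simp only [← compRingEquiv_apply, map_mul]

end lyapBlock

theorem stmt_11_general {n : ℕ} (T : ℕ)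
    (M N : Matrix (Fin n) (Fin n) ℝ) (hN : N.PosDef) :
    (Matrix.of (fun (pq : Fin T × Fin n) (rs : Fin T × Fin n) =>
      (if (pq.1 : ℕ) < (rs.1 : ℕ) then
          (Mᵀ) ^ ((rs.1 : ℕ) - (pq.1 : ℕ)) * lyapPartialSum M N (T - 1 - (rs.1 : ℕ))
        else if (pq.1 : ℕ) = (rs.1 : ℕ) then lyapPartialSum M N (T - 1 - (rs.1 : ℕ))
        else lyapPartialSum M N (T - 1 - (pq.1 : ℕ)) * M ^ ((pq.1 : ℕ) - (rs.1 : ℕ)))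
        pq.2 rs.2)).PosDef := by
  have hinj : Function.Injective (comp _ _ _ _ ℝ (powerToeplitz M T)).mulVec := by
    rw [mulVec_injective_iff_isUnit, isUnit_iff_isUnit_det, det_comp_powerToeplitz]
    exact isUnit_one
  change (comp _ _ _ _ ℝ (lyapBlock M N T)).PosDef
  rw [comp_lyapBlock]
  exact (PosDef.one.kronecker hN).conjTranspose_mul_mul_same hinj

/-- The `nT × nT` block matrix `D(T)` with blocks (for 1-based block indices
`i, j`, here represented 0-based) `D_{ij} = (Mᵀ)^{j−i} S_{T−j}` if `i < j`,
`D_{jj} = S_{T−j}`, and `D_{ij} = S_{T−i} M^{i−j}` if `i > j`, where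
`S_m = Σ_{k=0}^m (Mᵀ)^k N M^k`, is positive definite whenever `N ≻ 0`. -/
theorem stmt_11 {n : ℕ} (T : ℕ) (hT : 0 < T)
    (M N : Matrix (Fin n) (Fin n) ℝ) (hN : N.PosDef) :
    (Matrix.of (fun (pq : Fin T × Fin n) (rs : Fin T × Fin n) =>
      (if (pq.1 : ℕ) < (rs.1 : ℕ) then
          (Mᵀ) ^ ((rs.1 : ℕ) - (pq.1 : ℕ)) * lyapPartialSum M N (T - 1 - (rs.1 : ℕ))
        else if (pq.1 : ℕ) = (rs.1 : ℕ) then lyapPartialSum M N (T - 1 - (rs.1 : ℕ))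
        else lyapPartialSum M N (T - 1 - (pq.1 : ℕ)) * M ^ ((pq.1 : ℕ) - (rs.1 : ℕ)))
        pq.2 rs.2)).PosDef :=
  stmt_11_general T M N hN
end

section
/- Let M ∈ ℝ^{n×n}, P ∈ ℝ^{n×n} symmetric positive definite, and suppose P satisfies the Lyapunov equation P = MᵀPM + N for some positive definite N. Then for any positive integer T, the nT×nT block matrix G with blocks G_{ij} = (Mᵀ)^{j−i} P for i ≤ j and G_{ij} = P M^{i−j} for i > j is positive semidefinite. -/
/-!
Let `L` be the block lower-triangular Toeplitz matrix with blocks `L k i = M ^ (k - i)` for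
`i ≤ k`, which maps an input sequence `u` to the states `y k = ∑_{i ≤ k} M ^ (k - i) u i`,
and let `D = diag(N, …, N, P)`. Then `G = Lᵀ D L`, i.e.
`uᵀ G u = ∑_{k < T - 1} y kᵀ N y k + y (T - 1)ᵀ P y (T - 1)`, so `G`
is positive semidefinite.
Entrywise, `G = Lᵀ D L` is the telescoping identity obtained by iterating `P = Mᵀ P M + N`
from time `max i j` up to time `T - 1`.
-/

open Matrix Finset

theorem pow_mul_mul_pow_eq_sum_range_add {R : Type*} [Ring R] {A B P N : R}
    (h : P = A * P * B + N) (a b s : ℕ) :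
    A ^ a * P * B ^ b =
      ∑ l ∈ range s, A ^ (a + l) * N * B ^ (b + l) + A ^ (a + s) * P * B ^ (b + s) := by
  have hstep : ∀ l, A ^ (a + l) * N * B ^ (b + l) =
      A ^ (a + l) * P * B ^ (b + l) - A ^ (a + (l + 1)) * P * B ^ (b + (l + 1)) := by
    intro l
    rw [← add_assoc, ← add_assoc, pow_succ, pow_succ', eq_sub_of_add_eq' h.symm]
    noncomm_ring
  rw [sum_congr rfl fun l _ => hstep l, sum_range_sub', add_zero, add_zero, sub_add_cancel]

namespace Lyapunov

variable {m : Type*}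

def stageWeight (P N : Matrix m m ℝ) (T k : ℕ) : Matrix m m ℝ := if k + 1 = T then P else N

theorem stageWeight_posSemidef {P N : Matrix m m ℝ} (hP : P.PosSemidef) (hN : N.PosSemidef)
    (T k : ℕ) : (stageWeight P N T k).PosSemidef := by
  unfold stageWeight
  split_ifs
  exacts [hP, hN]

variable [Fintype m] [DecidableEq m] (M P N : Matrix m m ℝ)

def transitionBlock (k i : ℕ) : Matrix m m ℝ := if i ≤ k then M ^ (k - i) else 0

def gramBlock (i j : ℕ) : Matrix m m ℝ :=
  if i ≤ j then Mᵀ ^ (j - i) * P else P * M ^ (i - j)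

def transitionRow (T k : ℕ) : Matrix m (Fin T × m) ℝ :=
  of fun q rs => transitionBlock M k rs.1 q rs.2

def gram (T : ℕ) : Matrix (Fin T × m) (Fin T × m) ℝ :=
  of fun pq rs => gramBlock M P pq.1 rs.1 pq.2 rs.2

variable {M P N}

theorem gramBlock_eq_sum (hLyap : P = Mᵀ * P * M + N) {T i j : ℕ} (hi : i < T) (hj : j < T) :
    gramBlock M P i j = ∑ k ∈ range T,
      (transitionBlock M k i)ᵀ * stageWeight P N T k * transitionBlock M k j := by
  obtain ⟨s, rfl⟩ : ∃ s, T = max i j + (s + 1) := ⟨T - 1 - max i j, by omega⟩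
  set c := max i j with hc
  set W := stageWeight P N (c + (s + 1))
  have hlow : ∀ k ∈ range c, (transitionBlock M k i)ᵀ * W k * transitionBlock M k j = 0 := by
    intro k hk
    rcases lt_max_iff.mp (mem_range.mp hk) with h | h <;> simp [transitionBlock, h.not_ge]
  have hhigh : ∀ l, (transitionBlock M (c + l) i)ᵀ * W (c + l) * transitionBlock M (c + l) j =
      Mᵀ ^ (c - i + l) * W (c + l) * M ^ (c - j + l) := by
    intro l
    rw [transitionBlock, transitionBlock, if_pos (by omega), if_pos (by omega), transpose_pow,
      Nat.sub_add_comm (le_max_left i j), Nat.sub_add_comm (le_max_right i j)]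
  have hweight : ∀ l ∈ range s, W (c + l) = N :=
    fun l hl => if_neg (by rw [mem_range] at hl; omega)
  rw [sum_range_add, sum_eq_zero hlow, zero_add, sum_congr rfl fun l _ => hhigh l,
    sum_range_succ, sum_congr rfl fun l hl => by rw [hweight l hl], show W (c + s) = P from
    if_pos (by omega), ← pow_mul_mul_pow_eq_sum_range_add hLyap, gramBlock]
  split_ifs with h
  · rw [hc, max_eq_right h, Nat.sub_self, pow_zero, mul_one]
  · rw [hc, max_eq_left (by omega), Nat.sub_self, pow_zero, one_mul]

theorem gram_eq_sum (hLyap : P = Mᵀ * P * M + N) (T : ℕ) :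
    gram M P T = ∑ k ∈ range T,
      (transitionRow M T k)ᴴ * stageWeight P N T k * transitionRow M T k := by
  ext ⟨p, q⟩ ⟨r, s⟩
  rw [gram, of_apply, gramBlock_eq_sum hLyap p.isLt r.isLt, Matrix.sum_apply, Matrix.sum_apply]
  refine sum_congr rfl fun k _ => ?_
  simp [mul_apply, transitionRow]

theorem gram_posSemidef (hP : P.PosSemidef) (hN : N.PosSemidef)
    (hLyap : P = Mᵀ * P * M + N) (T : ℕ) : (gram M P T).PosSemidef := by
  rw [gram_eq_sum hLyap]
  exact posSemidef_sum _ fun k _ =>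
    (stageWeight_posSemidef hP hN T k).conjTranspose_mul_mul_same _

end Lyapunov

theorem stmt_12_general {n : ℕ} (T : ℕ)
    (M P N : Matrix (Fin n) (Fin n) ℝ) (hP : P.PosDef)
    (hN : N.PosDef) (hLyap : P = Mᵀ * P * M + N) :
    (Matrix.of (fun (pq : Fin T × Fin n) (rs : Fin T × Fin n) =>
      (if (pq.1 : ℕ) ≤ (rs.1 : ℕ) then (Mᵀ) ^ ((rs.1 : ℕ) - (pq.1 : ℕ)) * P
        else P * M ^ ((pq.1 : ℕ) - (rs.1 : ℕ))) pq.2 rs.2)).PosSemidef :=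
  Lyapunov.gram_posSemidef hP.posSemidef hN.posSemidef hLyap T

/-- If `P ≻ 0` is symmetric and satisfies the Lyapunov equation
`P = MᵀPM + N` with `N ≻ 0`, then for any positive integer `T` the `nT × nT`
block matrix `G` with blocks `G_{ij} = (Mᵀ)^{j−i} P` for `i ≤ j` and
`G_{ij} = P M^{i−j}` for `i > j` is positive semidefinite. -/
theorem stmt_12 {n : ℕ} (T : ℕ) (hT : 0 < T)
    (M P N : Matrix (Fin n) (Fin n) ℝ) (hPsym : Pᵀ = P) (hP : P.PosDef)
    (hN : N.PosDef) (hLyap : P = Mᵀ * P * M + N) :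
    (Matrix.of (fun (pq : Fin T × Fin n) (rs : Fin T × Fin n) =>
      (if (pq.1 : ℕ) ≤ (rs.1 : ℕ) then (Mᵀ) ^ ((rs.1 : ℕ) - (pq.1 : ℕ)) * P
        else P * M ^ ((pq.1 : ℕ) - (rs.1 : ℕ))) pq.2 rs.2)).PosSemidef :=
  stmt_12_general T M P N hP hN hLyap
end

section
/- Let P ∈ ℝ^{n×n} be symmetric positive semidefinite satisfying the Lyapunov equation P = MᵀPM + N with N positive definite, and let B ∈ ℝ^{n×p}. Then for any vectors v₀,…,v_{T−1} ∈ ℝᵖ and any positive definite R ∈ ℝ^{p×p}, Σ_{j=0}^{T−1} v_jᵀ(BᵀPB + R)v_j + 2 Σ_{0≤i<j≤T−1} v_iᵀ Bᵀ (Mᵀ)^{j−i} P B v_j ≥ λ_min(R) Σ_{j=0}^{T−1} ‖v_j‖². -/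
/-!
Run the system `x₀ = 0`, `x_{k+1} = M x_k + B v_k`. Expanding `x_{k+1}ᵀ P x_{k+1}` and using
`MᵀPM = P - N`, the `P`-part of the left-hand side telescopes to
`x_Tᵀ P x_T + Σ_{k<T} x_kᵀ N x_k ≥ 0`, the cross terms being `x_kᵀ MᵀPB v_k` with `x_k` unrolled.
What remains is `Σ_j v_jᵀ R v_j`, bounded below by the Rayleigh estimate for `R`.
-/

open Finset Matrix

open scoped MatrixOrder in
lemma Matrix.IsHermitian.iInf_eigenvalues_mul_dotProduct_self_le_s18 {ι : Type*} [Fintype ι]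
    [DecidableEq ι] {A : Matrix ι ι ℝ} (hA : A.IsHermitian) (x : ι → ℝ) :
    (⨅ k, hA.eigenvalues k) * (x ⬝ᵥ x) ≤ x ⬝ᵥ A *ᵥ x := by
  have hle : algebraMap ℝ (Matrix ι ι ℝ) (⨅ k, hA.eigenvalues k) ≤ A := by
    rw [algebraMap_le_iff_le_spectrum hA.isSelfAdjoint, hA.spectrum_real_eq_range_eigenvalues]
    rintro _ ⟨i, rfl⟩
    exact ciInf_le (Finite.bddBelow_range _) i
  simpa [Algebra.algebraMap_eq_smul_one, sub_mulVec, smul_mulVec] using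
    (Matrix.le_iff.mp hle).dotProduct_mulVec_nonneg x

lemma Matrix.IsSymm.add_dotProduct_mulVec_add {ι α : Type*} [Fintype ι] [CommRing α]
    {P : Matrix ι ι α} (hP : P.IsSymm) (x y : ι → α) :
    (x + y) ⬝ᵥ P *ᵥ (x + y) = x ⬝ᵥ P *ᵥ x + 2 * (x ⬝ᵥ P *ᵥ y) + y ⬝ᵥ P *ᵥ y := by
  have hyx : y ⬝ᵥ P *ᵥ x = x ⬝ᵥ P *ᵥ y := by
    rw [← dotProduct_transpose_mulVec, hP.eq]
  rw [mulVec_add, add_dotProduct, dotProduct_add, dotProduct_add, hyx]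
  ring

section LinearTrajectory

variable {ι κ α : Type*} [Fintype ι] [DecidableEq ι] [Fintype κ] [CommRing α]

def linearTrajectory (M : Matrix ι ι α) (B : Matrix ι κ α) (v : ℕ → κ → α) : ℕ → ι → α
  | 0 => 0
  | k + 1 => M *ᵥ linearTrajectory M B v k + B *ᵥ v k

variable (M : Matrix ι ι α) (B : Matrix ι κ α) (v : ℕ → κ → α)

lemma linearTrajectory_eq_sum (T : ℕ) :
    linearTrajectory M B v T = ∑ i ∈ range T, M ^ (T - 1 - i) *ᵥ B *ᵥ v i := by
  induction T with
  | zero => rfl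
  | succ T ih =>
    rw [linearTrajectory, ih, mulVec_sum, sum_range_succ, Nat.add_sub_cancel, Nat.sub_self,
      pow_zero, one_mulVec]
    congr 1
    refine sum_congr rfl fun i hi => ?_
    rw [mulVec_mulVec, ← pow_succ', Nat.sub_right_comm, Nat.sub_add_cancel]
    have := mem_range.mp hi
    omega

lemma linearTrajectory_dotProduct_mulVec (P : Matrix ι ι α) (T : ℕ) (u : κ → α) :
    linearTrajectory M B v T ⬝ᵥ (Mᵀ * P * B) *ᵥ u =
      ∑ i ∈ range T, v i ⬝ᵥ (Bᵀ * Mᵀ ^ (T - i) * P * B) *ᵥ u := by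
  rw [linearTrajectory_eq_sum, sum_dotProduct]
  refine sum_congr rfl fun i hi => ?_
  have hT : T - i = T - 1 - i + 1 := by have := mem_range.mp hi; omega
  rw [hT, pow_succ, ← transpose_pow]
  simp only [Matrix.mul_assoc, ← mulVec_mulVec, dotProduct_mulVec _ Bᵀ, vecMul_transpose,
    dotProduct_mulVec _ (M ^ (T - 1 - i))ᵀ]

lemma sum_quadratic_add_cross_eq_linearTrajectory {P : Matrix ι ι α} (hP : P.IsSymm) (T : ℕ) :
    ∑ j ∈ range T, B *ᵥ v j ⬝ᵥ P *ᵥ B *ᵥ v j +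
        2 * ∑ j ∈ range T, ∑ i ∈ range j, v i ⬝ᵥ (Bᵀ * Mᵀ ^ (j - i) * P * B) *ᵥ v j =
      linearTrajectory M B v T ⬝ᵥ P *ᵥ linearTrajectory M B v T +
        ∑ k ∈ range T,
          linearTrajectory M B v k ⬝ᵥ (P - Mᵀ * P * M) *ᵥ linearTrajectory M B v k := by
  induction T with
  | zero => simp [linearTrajectory]
  | succ T ih =>
    set x := linearTrajectory M B v T
    have hMx : M *ᵥ x ⬝ᵥ P *ᵥ M *ᵥ x = x ⬝ᵥ (Mᵀ * P * M) *ᵥ x := by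
      rw [← mulVec_mulVec, ← mulVec_mulVec, dotProduct_comm, ← dotProduct_transpose_mulVec]
    have hcross : M *ᵥ x ⬝ᵥ P *ᵥ B *ᵥ v T = x ⬝ᵥ (Mᵀ * P * B) *ᵥ v T := by
      rw [← mulVec_mulVec, ← mulVec_mulVec, dotProduct_comm, ← dotProduct_transpose_mulVec]
    rw [sum_range_succ, sum_range_succ, sum_range_succ, linearTrajectory,
      hP.add_dotProduct_mulVec_add, hMx, hcross, linearTrajectory_dotProduct_mulVec, sub_mulVec,
      dotProduct_sub]
    linear_combination ih

end LinearTrajectory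

/-- If `P ⪰ 0` satisfies the Lyapunov equation `P = MᵀPM + N` with `N ≻ 0`,
then for any `v₀,…,v_{T−1} ∈ ℝᵖ` and `R ≻ 0`,
`Σ_j v_jᵀ(BᵀPB + R)v_j + 2 Σ_{i<j} v_iᵀ Bᵀ(Mᵀ)^{j−i} P B v_j
  ≥ λ_min(R) Σ_j ‖v_j‖²`. -/
theorem stmt_18 {n p : ℕ} (M P N : Matrix (Fin n) (Fin n) ℝ)
    (B : Matrix (Fin n) (Fin p) ℝ) (R : Matrix (Fin p) (Fin p) ℝ)
    (hP : P.PosSemidef) (hN : N.PosDef) (hLyap : P = Mᵀ * P * M + N)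
    (hR : R.PosDef) (T : ℕ) (v : ℕ → Fin p → ℝ) :
    ∑ j ∈ Finset.range T, v j ⬝ᵥ (Bᵀ * P * B + R).mulVec (v j) +
        2 * ∑ j ∈ Finset.range T, ∑ i ∈ Finset.range j,
          v i ⬝ᵥ (Bᵀ * (Mᵀ) ^ (j - i) * P * B).mulVec (v j) ≥
      (⨅ k, hR.1.eigenvalues k) * ∑ j ∈ Finset.range T, ∑ i, v j i ^ 2 := by
  set x := linearTrajectory M B v
  have hsplit (u : Fin p → ℝ) :
      u ⬝ᵥ (Bᵀ * P * B + R) *ᵥ u = B *ᵥ u ⬝ᵥ P *ᵥ B *ᵥ u + u ⬝ᵥ R *ᵥ u := by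
    rw [add_mulVec, dotProduct_add, ← mulVec_mulVec, ← mulVec_mulVec, dotProduct_transpose_mulVec,
      dotProduct_comm]
  have htelescope := sum_quadratic_add_cross_eq_linearTrajectory M B v
    (by simpa using hP.isHermitian) T
  rw [sub_eq_of_eq_add' hLyap] at htelescope
  have hPx : 0 ≤ x T ⬝ᵥ P *ᵥ x T := by simpa using hP.dotProduct_mulVec_nonneg (x T)
  have hNx : 0 ≤ ∑ k ∈ range T, x k ⬝ᵥ N *ᵥ x k :=
    sum_nonneg fun k _ => by simpa using hN.posSemidef.dotProduct_mulVec_nonneg (x k)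
  have hRx : (⨅ k, hR.1.eigenvalues k) * ∑ j ∈ range T, ∑ i, v j i ^ 2 ≤
      ∑ j ∈ range T, v j ⬝ᵥ R *ᵥ v j := by
    rw [mul_sum]
    exact sum_le_sum fun j _ => by
      simpa [dotProduct, sq] using hR.1.iInf_eigenvalues_mul_dotProduct_self_le_s18 (v j)
  simp only [hsplit, sum_add_distrib]
  linarith
end
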